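/- Let P : C^op → InfSL be an existential m-variational doctrine (elementary, existential, with comprehensive diagonals and full strong comprehension). Then P satisfies the rule of unique choice (every total single-valued relation F ∈ P(A×B) is represented by an arrow f : A → B with F(a,b) equivalent to f(a) =_B b) if and only if every arrow of C that is both P-injective and P-surjective is an isomorphism. -/

import Mathlib

/-!
With comprehensive diagonals and full comprehension, a predicate `α` over `A` is determined by the
arrows `q` into `A` with `P q α = ⊤`, and `P q (P ⟨u, v⟩ δ) = ⊤` means `q ≫ u = q ≫ v`. In these
terms `P`-injective arrows are exactly the monos, and single-valuedness of `F` says that two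
arrows into `A ⨯ B` landing in `F` and agreeing on `A` agree on `B`.

If RUC holds and `f : X ⟶ A` is `P`-injective and `P`-surjective, the relation `a = f x` is total
and single-valued, and the arrow representing it is an inverse of `f`. Conversely, for a total
single-valued `F`, the first projection of the comprehension `{F} ⟶ A ⨯ B` is `P`-surjective by
totality and monic by single-valuedness and strong comprehension, hence invertible; composed with
the second projection, its inverse represents `F`.
-/

open CategoryTheory CategoryTheory.Limits Opposite

noncomputable section

universe w v u

namespace DoctrinePaper

variable {C : Type u} [Category.{v} C] [HasFiniteProducts C]

/-- The fiber of a primary doctrine `P : Cᵒᵖ ⥤ SemilatInfCat` over an object `A`. -/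
abbrev Fib (P : Cᵒᵖ ⥤ SemilatInfCat.{w}) (A : C) : Type w :=
  ↥(P.obj (op A))

/-- Reindexing along an arrow `f : A ⟶ B`. -/
def rmap (P : Cᵒᵖ ⥤ SemilatInfCat.{w}) {A B : C} (f : A ⟶ B) :
    Fib P B → Fib P A :=
  fun x => (P.map f.op) x

variable (P : Cᵒᵖ ⥤ SemilatInfCat.{w})

/-- An elementary doctrine: fibered equalities `δ A ∈ P (A ⨯ A)` such that
`E_e(α) = P⟨pr1,pr2⟩(α) ⊓ P⟨pr2,pr3⟩(δ A)` is left adjoint to reindexing along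
`e = ⟨pr1,pr2,pr2⟩ : X ⨯ A ⟶ (X ⨯ A) ⨯ A`. -/
structure IsElementary where
  δ : ∀ A : C, Fib P (A ⨯ A)
  adj :
    ∀ (X A : C) (α : Fib P (X ⨯ A)) (β : Fib P ((X ⨯ A) ⨯ A)),
      (rmap P (prod.fst : (X ⨯ A) ⨯ A ⟶ X ⨯ A) α ⊓
          rmap P (prod.lift (prod.fst ≫ prod.snd) prod.snd : (X ⨯ A) ⨯ A ⟶ A ⨯ A) (δ A) ≤ β)
        ↔ α ≤ rmap P (prod.lift (𝟙 (X ⨯ A)) prod.snd : X ⨯ A ⟶ (X ⨯ A) ⨯ A) β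

/-- A `P`-equivalence relation over `A`. -/
structure IsEqRel (hE : IsElementary P) {A : C} (ρ : Fib P (A ⨯ A)) : Prop where
  refl : hE.δ A ≤ ρ
  symm : ρ = rmap P (prod.lift prod.snd prod.fst : A ⨯ A ⟶ A ⨯ A) ρ
  trans :
    rmap P (prod.fst : (A ⨯ A) ⨯ A ⟶ A ⨯ A) ρ ⊓
        rmap P (prod.lift (prod.fst ≫ prod.snd) prod.snd : (A ⨯ A) ⨯ A ⟶ A ⨯ A) ρ ≤
      rmap P (prod.lift (prod.fst ≫ prod.fst) prod.snd : (A ⨯ A) ⨯ A ⟶ A ⨯ A) ρ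

/-- An elementary existential doctrine, together with the induced left adjoints
`∃_f` along all arrows, satisfying the adjunction law, Frobenius reciprocity, and
the Beck–Chevalley condition along pullbacks of projections. -/
structure IsExistential extends IsElementary P where
  E : ∀ {A B : C}, (A ⟶ B) → Fib P A → Fib P B
  adjE : ∀ {A B : C} (f : A ⟶ B) (α : Fib P A) (β : Fib P B),
    E f α ≤ β ↔ α ≤ rmap P f β
  frobenius : ∀ {A B : C} (f : A ⟶ B) (α : Fib P A) (β : Fib P B),
    E f (α ⊓ rmap P f β) = E f α ⊓ β
  beckChevalley : ∀ {B A A' : C} (f : A' ⟶ A) (β : Fib P (B ⨯ A)),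
    E (prod.snd : B ⨯ A' ⟶ A') (rmap P (prod.map (𝟙 B) f) β) =
      rmap P f (E (prod.snd : B ⨯ A ⟶ A) β)

/-- Descent data for a relation `ρ` over `A`. -/
def Des {A : C} (ρ : Fib P (A ⨯ A)) : Set (Fib P A) :=
  {α | rmap P (prod.fst : A ⨯ A ⟶ A) α ⊓ ρ ≤ rmap P (prod.snd : A ⨯ A ⟶ A) α}

/-- Comprehensive diagonals: `f = g` iff `⊤ = P⟨f,g⟩(δ)`. -/
def ComprehensiveDiagonals (hE : IsElementary P) : Prop :=
  ∀ {X A : C} (f g : X ⟶ A), f = g ↔ rmap P (prod.lift f g) (hE.δ A) = ⊤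

/-- (Weak) comprehension structure. -/
structure Comprehension where
  cObj : ∀ {A : C}, Fib P A → C
  cArr : ∀ {A : C} (α : Fib P A), cObj α ⟶ A
  cTop : ∀ {A : C} (α : Fib P A), rmap P (cArr α) α = ⊤
  cUniv : ∀ {A : C} (α : Fib P A) {Y : C} (f : Y ⟶ A),
    rmap P f α = ⊤ → ∃ k : Y ⟶ cObj α, k ≫ cArr α = f

/-- Full comprehension. -/
def Comprehension.Full (hC : Comprehension P) : Prop :=
  ∀ {A : C} (α β : Fib P A), α ≤ β ↔ rmap P (hC.cArr α) β = ⊤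

/-- Strong comprehension: comprehension arrows are monic. -/
def Comprehension.Strong (hC : Comprehension P) : Prop :=
  ∀ {A : C} (α : Fib P A), Mono (hC.cArr α)

/-- `P`-injective arrow. -/
def PInj (hE : IsElementary P) {X A : C} (f : X ⟶ A) : Prop :=
  rmap P (prod.map f f) (hE.δ A) = hE.δ X

/-- `P`-surjective arrow. -/
def PSurj (hEx : IsExistential P) {X A : C} (f : X ⟶ A) : Prop :=
  hEx.E f (⊤ : Fib P X) = ⊤

/-- The product relation `ρ ⊠ σ` on `(A ⨯ B) ⨯ (A ⨯ B)`. -/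
def boxprod {A B : C} (ρ : Fib P (A ⨯ A)) (σ : Fib P (B ⨯ B)) :
    Fib P ((A ⨯ B) ⨯ (A ⨯ B)) :=
  rmap P (prod.map prod.fst prod.fst) ρ ⊓ rmap P (prod.map prod.snd prod.snd) σ

/-- A relation `F ∈ P(A ⨯ B)` is total (entire). -/
def Total (hP : IsExistential P) {A B : C} (F : Fib P (A ⨯ B)) : Prop :=
  hP.E (prod.fst : A ⨯ B ⟶ A) F = ⊤

/-- A relation `F ∈ P(A ⨯ B)` is single-valued (functional):
`P⟨pr1,pr2⟩F ⊓ P⟨pr1,pr3⟩F ≤ P⟨pr2,pr3⟩(δ B)` in `P((A ⨯ B) ⨯ B)`. -/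
def SingleValued (hE : IsElementary P) {A B : C} (F : Fib P (A ⨯ B)) : Prop :=
  rmap P (prod.fst : (A ⨯ B) ⨯ B ⟶ A ⨯ B) F ⊓
      rmap P (prod.lift (prod.fst ≫ prod.fst) prod.snd : (A ⨯ B) ⨯ B ⟶ A ⨯ B) F ≤
    rmap P (prod.lift (prod.fst ≫ prod.snd) prod.snd : (A ⨯ B) ⨯ B ⟶ B ⨯ B) (hE.δ B)

/-- The rule of unique choice: every total single-valued relation is represented
by an arrow, `F = P(f × id)(δ B)`. -/
def RUC (hP : IsExistential P) : Prop :=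
  ∀ {A B : C} (F : Fib P (A ⨯ B)), Total P hP F → SingleValued P hP.toIsElementary F →
    ∃ f : A ⟶ B, F = rmap P (prod.map f (𝟙 B)) (hP.δ B)

attribute [local simp] prod.lift_fst prod.lift_snd prod.lift_fst_assoc prod.lift_snd_assoc

section Reindexing

omit [HasFiniteProducts C] in
theorem rmap_rmap {A B D : C} (f : A ⟶ B) (g : B ⟶ D) (x : Fib P D) :
    rmap P f (rmap P g x) = rmap P (f ≫ g) x := by
  simp only [rmap, op_comp, P.map_comp]; rfl

omit [HasFiniteProducts C] in
theorem rmap_mono {A B : C} (f : A ⟶ B) {x y : Fib P B} (h : x ≤ y) :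
    rmap P f x ≤ rmap P f y :=
  OrderHomClass.mono (show InfTopHom _ _ from P.map f.op) h

omit [HasFiniteProducts C] in
theorem rmap_top {A B : C} (f : A ⟶ B) : rmap P f (⊤ : Fib P B) = ⊤ :=
  (show InfTopHom _ _ from P.map f.op).map_top'

omit [HasFiniteProducts C] in
theorem rmap_inf {A B : C} (f : A ⟶ B) (x y : Fib P B) :
    rmap P f (x ⊓ y) = rmap P f x ⊓ rmap P f y :=
  (show InfTopHom _ _ from P.map f.op).map_inf' x y

omit [HasFiniteProducts C] in
theorem rmap_eq_top_of_factors {A B D : C} {q : A ⟶ D} (k : A ⟶ B) {f : B ⟶ D}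
    {x : Fib P D} (hq : k ≫ f = q) (hf : rmap P f x = ⊤) : rmap P q x = ⊤ := by
  rw [← hq, ← rmap_rmap, hf, rmap_top]

end Reindexing

section Diagonals

variable {hE : IsElementary P} (hcd : ComprehensiveDiagonals P hE)
include hcd

theorem rmap_delta_eq_top_iff {X A : C} (u : X ⟶ A ⨯ A) :
    rmap P u (hE.δ A) = ⊤ ↔ u ≫ prod.fst = u ≫ prod.snd := by
  rw [hcd, ← prod.comp_lift, prod.lift_fst_snd, Category.comp_id]

theorem rmap_prodMap_delta_eq_top_iff {Z X Y A : C} (q : Z ⟶ X ⨯ Y) (f : X ⟶ A) (g : Y ⟶ A) :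
    rmap P q (rmap P (prod.map f g) (hE.δ A)) = ⊤ ↔ q ≫ prod.fst ≫ f = q ≫ prod.snd ≫ g := by
  rw [rmap_rmap, rmap_delta_eq_top_iff P hcd]
  simp

theorem mono_of_pInj {X A : C} {f : X ⟶ A} (hf : PInj P hE f) : Mono f where
  right_cancellation a b hab := by
    rw [hcd, ← hf, rmap_prodMap_delta_eq_top_iff P hcd]
    simpa using hab

theorem SingleValued.snd_eq {A B Z : C} {F : Fib P (A ⨯ B)} (hF : SingleValued P hE F)
    {u v : Z ⟶ A ⨯ B} (hu : rmap P u F = ⊤) (hv : rmap P v F = ⊤)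
    (huv : u ≫ prod.fst = v ≫ prod.fst) : u ≫ prod.snd = v ≫ prod.snd := by
  set q : Z ⟶ (A ⨯ B) ⨯ B := prod.lift u (v ≫ prod.snd)
  have hqv : q ≫ prod.lift (prod.fst ≫ prod.fst) prod.snd = v := by
    ext <;> simp [q, huv]
  have h := rmap_mono P q hF
  rw [rmap_inf, rmap_rmap, rmap_rmap, hqv, hv, rmap_rmap, prod.lift_fst, hu, inf_top_eq,
    top_le_iff, rmap_delta_eq_top_iff P hcd] at h
  simpa [q] using h

end Diagonals

section Comprehension

omit [HasFiniteProducts C] in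
theorem rmap_eq_top_iff_factors (hC : Comprehension P) {A Z : C} (α : Fib P A) (q : Z ⟶ A) :
    rmap P q α = ⊤ ↔ ∃ k : Z ⟶ hC.cObj α, k ≫ hC.cArr α = q :=
  ⟨hC.cUniv α q, fun ⟨k, hk⟩ => rmap_eq_top_of_factors P k hk (hC.cTop α)⟩

variable {hC : Comprehension P} (hfull : hC.Full P)
include hfull

omit [HasFiniteProducts C] in
theorem le_of_forall_rmap_eq_top {A : C} {α β : Fib P A}
    (h : ∀ {Z : C} (q : Z ⟶ A), rmap P q α = ⊤ → rmap P q β = ⊤) : α ≤ β :=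
  (hfull α β).mpr (h (hC.cArr α) (hC.cTop α))

omit [HasFiniteProducts C] in
theorem eq_of_forall_rmap_eq_top_iff {A : C} {α β : Fib P A}
    (h : ∀ {Z : C} (q : Z ⟶ A), rmap P q α = ⊤ ↔ rmap P q β = ⊤) : α = β :=
  le_antisymm (le_of_forall_rmap_eq_top P hfull fun q => (h q).mp)
    (le_of_forall_rmap_eq_top P hfull fun q => (h q).mpr)

variable {hE : IsElementary P} (hcd : ComprehensiveDiagonals P hE)
include hcd

theorem pInj_of_mono {X A : C} (f : X ⟶ A) [Mono f] : PInj P hE f :=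
  eq_of_forall_rmap_eq_top_iff P hfull fun q => by
    rw [rmap_prodMap_delta_eq_top_iff P hcd, rmap_delta_eq_top_iff P hcd, ← Category.assoc,
      ← Category.assoc, cancel_mono]

theorem singleValued_of_forall {A B : C} {F : Fib P (A ⨯ B)}
    (h : ∀ {Z : C} (u v : Z ⟶ A ⨯ B), rmap P u F = ⊤ → rmap P v F = ⊤ →
      u ≫ prod.fst = v ≫ prod.fst → u ≫ prod.snd = v ≫ prod.snd) :
    SingleValued P hE F := by
  refine le_of_forall_rmap_eq_top P hfull fun q hq => ?_
  rw [rmap_inf, inf_eq_top_iff, rmap_rmap, rmap_rmap] at hq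
  rw [rmap_rmap, rmap_delta_eq_top_iff P hcd]
  simpa using h _ _ hq.1 hq.2 (by simp)

end Comprehension

section Existential

variable (hP : IsExistential P)

theorem E_mono {A B : C} (f : A ⟶ B) {x y : Fib P A} (h : x ≤ y) : hP.E f x ≤ hP.E f y :=
  (hP.adjE f x _).mpr (h.trans ((hP.adjE f y _).mp le_rfl))

theorem E_comp {A B D : C} (f : A ⟶ B) (g : B ⟶ D) (α : Fib P A) :
    hP.E (f ≫ g) α = hP.E g (hP.E f α) :=
  eq_of_forall_ge_iff fun β => by rw [hP.adjE, hP.adjE, hP.adjE, rmap_rmap]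

theorem E_cArr_top {hC : Comprehension P} (hfull : hC.Full P) {A : C} (α : Fib P A) :
    hP.E (hC.cArr α) ⊤ = α := by
  refine le_antisymm ((hP.adjE _ _ _).mpr (hC.cTop α).ge) ((hfull α _).mpr ?_)
  exact top_le_iff.mp ((hP.adjE _ _ _).mp le_rfl)

end Existential

/-- The relation `a = f x`: the graph of `f⁻¹` when `f` is invertible. -/
def converseGraph (hE : IsElementary P) {X A : C} (f : X ⟶ A) : Fib P (A ⨯ X) :=
  rmap P (prod.map (𝟙 A) f) (hE.δ A)

section ConverseGraph

variable {hE : IsElementary P} (hcd : ComprehensiveDiagonals P hE)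
include hcd

theorem rmap_converseGraph_eq_top_iff {Z X A : C} (f : X ⟶ A) (q : Z ⟶ A ⨯ X) :
    rmap P q (converseGraph P hE f) = ⊤ ↔ q ≫ prod.fst = q ≫ prod.snd ≫ f := by
  rw [converseGraph, rmap_prodMap_delta_eq_top_iff P hcd, Category.comp_id]

theorem singleValued_converseGraph {hC : Comprehension P} (hfull : hC.Full P) {X A : C}
    (f : X ⟶ A) [Mono f] : SingleValued P hE (converseGraph P hE f) :=
  singleValued_of_forall P hfull hcd fun u v hu hv huv => by
    rw [rmap_converseGraph_eq_top_iff P hcd] at hu hv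
    rw [← cancel_mono f, Category.assoc, Category.assoc, ← hu, ← hv, huv]

theorem isIso_of_converseGraph_eq {X A : C} {f : X ⟶ A} {g : A ⟶ X}
    (hg : converseGraph P hE f = rmap P (prod.map g (𝟙 X)) (hE.δ X)) : IsIso f := by
  have hgf : rmap P (prod.lift (𝟙 A) g) (converseGraph P hE f) = ⊤ := by
    rw [hg, rmap_prodMap_delta_eq_top_iff P hcd]; simp
  have hfg : rmap P (prod.lift f (𝟙 X)) (converseGraph P hE f) = ⊤ := by
    rw [rmap_converseGraph_eq_top_iff P hcd]; simp
  rw [rmap_converseGraph_eq_top_iff P hcd] at hgf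
  rw [hg, rmap_prodMap_delta_eq_top_iff P hcd] at hfg
  exact ⟨g, by simpa using hfg, by simpa using hgf.symm⟩

end ConverseGraph

theorem total_converseGraph_of_pSurj (hP : IsExistential P)
    (hcd : ComprehensiveDiagonals P hP.toIsElementary) {X A : C} {f : X ⟶ A}
    (hf : PSurj P hP f) : Total P hP (converseGraph P hP.toIsElementary f) := by
  have hunit : hP.E (prod.lift f (𝟙 X)) ⊤ ≤ converseGraph P hP.toIsElementary f := by
    rw [hP.adjE, top_le_iff, rmap_converseGraph_eq_top_iff P hcd]; simp
  refine top_le_iff.mp ?_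
  calc ⊤ = hP.E (prod.lift f (𝟙 X) ≫ prod.fst) ⊤ := by rw [prod.lift_fst]; exact hf.symm
    _ = hP.E prod.fst (hP.E (prod.lift f (𝟙 X)) ⊤) := E_comp P hP _ _ _
    _ ≤ _ := E_mono P hP _ hunit

theorem RUC.isIso_of_pInj_of_pSurj {hP : IsExistential P} (hruc : RUC P hP)
    (hcd : ComprehensiveDiagonals P hP.toIsElementary) {hC : Comprehension P}
    (hfull : hC.Full P) {X A : C} (f : X ⟶ A) (hinj : PInj P hP.toIsElementary f)
    (hsurj : PSurj P hP f) : IsIso f := by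
  have := mono_of_pInj P hcd hinj
  obtain ⟨g, hg⟩ := hruc _ (total_converseGraph_of_pSurj P hP hcd hsurj)
    (singleValued_converseGraph P hcd hfull f)
  exact isIso_of_converseGraph_eq P hcd hg

section Representation

variable {hE : IsElementary P} (hcd : ComprehensiveDiagonals P hE) {hC : Comprehension P}
include hcd

theorem mono_cArr_comp_fst (hstrong : hC.Strong P) {A B : C} {F : Fib P (A ⨯ B)}
    (hF : SingleValued P hE F) : Mono (hC.cArr F ≫ prod.fst) where
  right_cancellation a b hab := by
    have := hstrong F
    have hsnd := hF.snd_eq P hcd (u := a ≫ hC.cArr F) (v := b ≫ hC.cArr F)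
      (rmap_eq_top_of_factors P a rfl (hC.cTop F)) (rmap_eq_top_of_factors P b rfl (hC.cTop F))
      (by simpa using hab)
    rw [← cancel_mono (hC.cArr F)]
    ext
    · simpa using hab
    · simpa using hsnd

theorem eq_graph_of_isIso_cArr_comp_fst (hfull : hC.Full P) {A B : C} (F : Fib P (A ⨯ B))
    [IsIso (hC.cArr F ≫ prod.fst)] :
    F = rmap P (prod.map (inv (hC.cArr F ≫ prod.fst) ≫ hC.cArr F ≫ prod.snd) (𝟙 B)) (hE.δ B) :=
  eq_of_forall_rmap_eq_top_iff P hfull fun q => by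
    rw [rmap_prodMap_delta_eq_top_iff P hcd, rmap_eq_top_iff_factors P hC]
    constructor
    · rintro ⟨k, rfl⟩
      simp only [Category.assoc, Category.comp_id]
      rw [← Category.assoc (hC.cArr F), IsIso.hom_inv_id_assoc]
    · intro h
      refine ⟨q ≫ prod.fst ≫ inv (hC.cArr F ≫ prod.fst), ?_⟩
      ext
      · simp
      · simpa using h

end Representation

theorem pSurj_cArr_comp_fst (hP : IsExistential P) {hC : Comprehension P} (hfull : hC.Full P)
    {A B : C} {F : Fib P (A ⨯ B)} (hF : Total P hP F) : PSurj P hP (hC.cArr F ≫ prod.fst) := by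
  rw [PSurj, E_comp, E_cArr_top P hP hfull]
  exact hF

/-- An existential m-variational doctrine satisfies the rule of
unique choice iff every arrow which is both `P`-injective and `P`-surjective is
an isomorphism. -/
theorem RUC_iff_inj_surj_iso
    (hP : IsExistential P) (hC : Comprehension P)
    (hfull : hC.Full P) (hstrong : hC.Strong P)
    (hcd : ComprehensiveDiagonals P hP.toIsElementary) :
    RUC P hP ↔
      ∀ {X A : C} (f : X ⟶ A), PInj P hP.toIsElementary f → PSurj P hP f → IsIso f := by
  refine ⟨fun hruc _ _ f => hruc.isIso_of_pInj_of_pSurj P hcd hfull f,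
    fun hiso A B F htot hsv => ?_⟩
  have := mono_cArr_comp_fst P hcd hstrong hsv
  have := hiso _ (pInj_of_mono P hfull hcd _) (pSurj_cArr_comp_fst P hP hfull htot)
  exact ⟨_, eq_graph_of_isIso_cArr_comp_fst P hcd hfull F⟩

end DoctrinePaper
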